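/- arXiv:0704.1670 — 2 statements merged into one kernel-verified Lean document; each statement's English description precedes it below -/
import Mathlib

section
/- Let p ≥ 3 and q ≥ 3, and let (j₁, j₂, i₁, i₂) be an abstract square bridge diagram of size (p, q) with intersection count κ = Σ_{i : Fin p} (j₂ i − j₁ i + 1). Then κ < p·q. -/
/-- An abstract square bridge diagram of size `(p, q)`: the `i`-th horizontal
segment has its two endpoints (corners) on the `j₁ i`-th and `j₂ i`-th vertical
segments, and the `j`-th vertical segment has its endpoints on the `i₁ j`-th and
`i₂ j`-th horizontal segments. -/
structure SquareBridgeDiagram (p q : ℕ) where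
  j₁ : Fin p → Fin q
  j₂ : Fin p → Fin q
  i₁ : Fin q → Fin p
  i₂ : Fin q → Fin p
  j₁_lt_j₂ : ∀ i, j₁ i < j₂ i
  i₁_lt_i₂ : ∀ j, i₁ j < i₂ j
  corner : ∀ i j, (j = j₁ i ∨ j = j₂ i) ↔ (i = i₁ j ∨ i = i₂ j)

/-- The intersection count `κ = Σ_i (j₂ i − j₁ i + 1)`: the number of pairs
`(i, j)` with `j₁ i ≤ j ≤ j₂ i`, i.e. how many of the `q` vertical lines meet
the `i`-th horizontal segment. -/
def SquareBridgeDiagram.kappa {p q : ℕ} (D : SquareBridgeDiagram p q) : ℕ :=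
  ∑ i : Fin p, ((D.j₂ i : ℕ) - (D.j₁ i : ℕ) + 1)

/-- If `p ≥ 3` and `q ≥ 3` (the diagram is not a single rectangle), then the
intersection count of an abstract square bridge diagram of size `(p, q)`
satisfies `κ < p·q`. -/
theorem kappa_lt_pq (p q : ℕ) (hp : 3 ≤ p) (hq : 3 ≤ q)
    (D : SquareBridgeDiagram p q) : D.kappa < p * q := by
  have hq0 : 0 < q := by omega
  -- find i₀ not equal to i₁ 0 or i₂ 0
  have hcard : ({D.i₁ ⟨0, hq0⟩, D.i₂ ⟨0, hq0⟩} : Finset (Fin p)).card ≤ 2 :=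
    (Finset.card_insert_le _ _).trans (by simp)
  obtain ⟨i₀, hi₀⟩ : ∃ i₀ : Fin p, i₀ ∉ ({D.i₁ ⟨0, hq0⟩, D.i₂ ⟨0, hq0⟩} : Finset (Fin p)) := by
    by_contra h
    push_neg at h
    have : (Finset.univ : Finset (Fin p)).card ≤ 2 :=
      le_trans (Finset.card_le_card (fun x _ => h x)) hcard
    simp at this; omega
  simp only [Finset.mem_insert, Finset.mem_singleton, not_or] at hi₀
  have hj₁ : D.j₁ i₀ ≠ ⟨0, hq0⟩ := by
    intro h
    have := (D.corner i₀ ⟨0, hq0⟩).mp (Or.inl h.symm)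
    tauto
  have hj₁' : 1 ≤ (D.j₁ i₀ : ℕ) := by
    rcases Nat.eq_zero_or_pos (D.j₁ i₀ : ℕ) with h | h
    · exact absurd (Fin.ext h) hj₁
    · exact h
  have hterm : (D.j₂ i₀ : ℕ) - (D.j₁ i₀ : ℕ) + 1 < q := by
    have := (D.j₂ i₀).isLt
    omega
  have hle : ∀ i : Fin p, (D.j₂ i : ℕ) - (D.j₁ i : ℕ) + 1 ≤ q := by
    intro i
    have := (D.j₂ i).isLt
    have := D.j₁_lt_j₂ i
    omega
  calc D.kappa < ∑ _i : Fin p, q := by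
        exact Finset.sum_lt_sum (fun i _ => hle i) ⟨i₀, Finset.mem_univ _, hterm⟩
    _ = p * q := by simp [Finset.sum_const, Finset.card_univ, mul_comm]
end

section
/- Let p ≥ 4 and q ≥ 4, and let (j₁, j₂, i₁, i₂) be a connected abstract square bridge diagram of size (p, q) with intersection count κ = Σ_{i : Fin p} (j₂ i − j₁ i + 1). Then κ ≤ p·q − p. -/
/-- The bipartite incidence graph of a square bridge diagram: the horizontal
segment `i` is adjacent to the vertical segment `j` exactly when the two
segments intersect, i.e. `j₁ i ≤ j ≤ j₂ i` and `i₁ j ≤ i ≤ i₂ j`. -/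
def SquareBridgeDiagram.graph {p q : ℕ} (D : SquareBridgeDiagram p q) :
    SimpleGraph (Fin p ⊕ Fin q) where
  Adj x y :=
    match x, y with
    | Sum.inl i, Sum.inr j =>
        (D.j₁ i ≤ j ∧ j ≤ D.j₂ i) ∧ (D.i₁ j ≤ i ∧ i ≤ D.i₂ j)
    | Sum.inr j, Sum.inl i =>
        (D.j₁ i ≤ j ∧ j ≤ D.j₂ i) ∧ (D.i₁ j ≤ i ∧ i ≤ D.i₂ j)
    | _, _ => False
  symm := by
    constructor
    intro x y h
    cases x <;> cases y <;> simp_all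
  loopless := by
    constructor
    intro x h
    cases x <;> simp_all

/-- A square bridge diagram is connected if its bipartite incidence graph is
connected (the corresponding link is not split). -/
def SquareBridgeDiagram.Connected {p q : ℕ} (D : SquareBridgeDiagram p q) :
    Prop :=
  D.graph.Connected


/-!
Every vertical segment carries exactly two corners, so at most two horizontal segments start
on column `0` and at most two on column `1`; hence `Σ i, j₁ i ≥ 2p - 6`, and symmetrically
`Σ i, (q - 1 - j₂ i) ≥ 2p - 6`. These two sums together count the `pq - κ` pairs `(i, j)` with
`j` outside `[j₁ i, j₂ i]`, so `pq - κ ≥ 4p - 12 ≥ p` once `p ≥ 4`.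
-/

open Finset

theorem two_mul_card_le_sum_add_six {ι : Type*} [Fintype ι] (f : ι → ℕ)
    (h₀ : #{i | f i = 0} ≤ 2) (h₁ : #{i | f i = 1} ≤ 2) :
    2 * Fintype.card ι ≤ ∑ i, f i + 6 := by
  have pointwise : ∀ i, 2 ≤ f i + 2 * (if f i = 0 then 1 else 0) + (if f i = 1 then 1 else 0) :=
    fun i ↦ by split_ifs <;> omega
  calc 2 * Fintype.card ι = ∑ _i : ι, 2 := by simp [mul_comm]
    _ ≤ ∑ i, (f i + 2 * (if f i = 0 then 1 else 0) + (if f i = 1 then 1 else 0)) :=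
      sum_le_sum fun i _ ↦ pointwise i
    _ = ∑ i, f i + 2 * #{i | f i = 0} + #{i | f i = 1} := by
      rw [sum_add_distrib, sum_add_distrib, ← mul_sum, card_filter, card_filter]
    _ ≤ ∑ i, f i + 6 := by omega

theorem two_mul_card_le_sum_val_add_six {ι : Type*} [Fintype ι] {q : ℕ} (f : ι → Fin q)
    (hf : ∀ j, #{i | f i = j} ≤ 2) :
    2 * Fintype.card ι ≤ ∑ i, (f i : ℕ) + 6 := by
  have fiber_le : ∀ n : ℕ, #{i | (f i : ℕ) = n} ≤ 2 := by
    intro n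
    by_cases hn : n < q
    · simpa only [Fin.ext_iff] using hf ⟨n, hn⟩
    · have : ∀ i, (f i : ℕ) ≠ n := fun i ↦ by have := (f i).isLt; omega
      simp [this]
  exact two_mul_card_le_sum_add_six _ (fiber_le 0) (fiber_le 1)

namespace SquareBridgeDiagram

variable {p q : ℕ} (D : SquareBridgeDiagram p q)

theorem card_filter_j₁_eq_le_two (j : Fin q) : #{i | D.j₁ i = j} ≤ 2 := by
  refine (card_le_card fun i hi ↦ ?_).trans (card_le_two (a := D.i₁ j) (b := D.i₂ j))
  have : j = D.j₁ i ∨ j = D.j₂ i := .inl (mem_filter.mp hi).2.symm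
  simpa using (D.corner i j).mp this

theorem card_filter_j₂_eq_le_two (j : Fin q) : #{i | D.j₂ i = j} ≤ 2 := by
  refine (card_le_card fun i hi ↦ ?_).trans (card_le_two (a := D.i₁ j) (b := D.i₂ j))
  have : j = D.j₁ i ∨ j = D.j₂ i := .inr (mem_filter.mp hi).2.symm
  simpa using (D.corner i j).mp this

theorem card_filter_j₂_rev_eq_le_two (j : Fin q) : #{i | (D.j₂ i).rev = j} ≤ 2 := by
  simpa only [Fin.rev_eq_iff] using D.card_filter_j₂_eq_le_two j.rev

/-- Row `i` misses the `j₁ i` columns to the left of its segment and the `(j₂ i).rev` columns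
to its right. -/
theorem kappa_add_sum_missing :
    D.kappa + ∑ i, ((D.j₁ i : ℕ) + (D.j₂ i).rev) = p * q := by
  rw [kappa, ← sum_add_distrib]
  have row : ∀ i, (D.j₂ i : ℕ) - D.j₁ i + 1 + (D.j₁ i + (D.j₂ i).rev) = q := fun i ↦ by
    have := D.j₁_lt_j₂ i
    have := (D.j₂ i).isLt
    rw [Fin.val_rev]
    omega
  rw [sum_congr rfl fun i _ ↦ row i]
  simp

end SquareBridgeDiagram

theorem kappa_le_pq_sub_p_general (p q : ℕ) (hp : 4 ≤ p)
    (D : SquareBridgeDiagram p q) :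
    D.kappa ≤ p * q - p := by
  have left := two_mul_card_le_sum_val_add_six D.j₁ D.card_filter_j₁_eq_le_two
  have right := two_mul_card_le_sum_val_add_six (fun i ↦ (D.j₂ i).rev)
    D.card_filter_j₂_rev_eq_le_two
  have total := D.kappa_add_sum_missing
  rw [sum_add_distrib] at total
  rw [Fintype.card_fin] at left right
  omega

/-- The key combinatorial estimate in part (4) of the main theorem: for a
connected abstract square bridge diagram of size `(p, q)` with `p ≥ 4` and
`q ≥ 4`, the intersection count satisfies `κ ≤ p·q − p`; i.e. at least `p` of
the `pq` possible bands are omitted when passing from the Seifert surface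
`F_{p,q}` to the ribbon `F`. -/
theorem kappa_le_pq_sub_p (p q : ℕ) (hp : 4 ≤ p) (hq : 4 ≤ q)
    (D : SquareBridgeDiagram p q) (hD : D.Connected) :
    D.kappa ≤ p * q - p :=
  kappa_le_pq_sub_p_general p q hp D
end
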